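/- arXiv:2112.13487 — 2 statements merged into one kernel-verified Lean document; each statement's English description precedes it below -/
import Mathlib

section
/- Let Π and 𝒪 be measurable spaces, let r : 𝒪 → [0,1] be a measurable reward function, and call a map M from Π to probability measures on 𝒪 a model, with f^M(π) := ∫ r dM(π) and π_M a maximizer of f^M over Π. Let 𝔐 be a class of models such that every M ∈ 𝔐 admits a maximizer π_M, and suppose there exists M₀ ∈ 𝔐 with f^{M₀} constant such that the pointwise mixture (1−λ)M₀ + λM belongs to 𝔐 for every M ∈ 𝔐 and λ ∈ [0,1]. For M̄ ∈ 𝔐 and ε ≥ 0 let 𝔐_ε(M̄) := { M ∈ 𝔐 : f^{M̄}(π_{M̄}) ≥ f^M(π_M) − ε }, and for a subclass 𝔐' ∋ at least one model define dec_γ(𝔐', M̄) := inf_p sup_{M ∈ 𝔐'} E_{π∼p}[ f^M(π_M) − f^M(π) − γ·D_H²(M(π), M̄(π)) ], where the infimum is over finitely supported probability distributions p on Π. Then for every ε ∈ [0,1] and every γ ≥ 0: sup_{M̄ ∈ 𝔐} dec_γ(𝔐_ε(M̄), M̄) ≥ ε · sup_{M̄ ∈ 𝔐} dec_γ(𝔐,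 M̄). -/
open MeasureTheory

/-- Squared Hellinger distance `D_H²(P,Q) = ∫ (√(dP/dν) − √(dQ/dν))² dν`
computed with the dominating measure `ν = P + Q`. -/
noncomputable def sqHellinger {α : Type*} [MeasurableSpace α] (P Q : Measure α) : ℝ :=
  ∫ x, (Real.sqrt ((P.rnDeriv (P + Q)) x).toReal
      - Real.sqrt ((Q.rnDeriv (P + Q)) x).toReal) ^ 2 ∂(P + Q)

/-- A finitely supported probability distribution on `X`. -/
structure FinDist (X : Type*) where
  support : Finset X
  w : X → ℝ
  nonneg : ∀ x, 0 ≤ w x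
  zero_of_not_mem : ∀ x ∉ support, w x = 0
  sum_eq_one : ∑ x ∈ support, w x = 1

/-- Expectation `E_{x∼p}[h(x)]` under a finitely supported distribution. -/
noncomputable def FinDist.expect {X : Type*} (p : FinDist X) (h : X → ℝ) : ℝ :=
  ∑ x ∈ p.support, p.w x * h x

/-- Mean reward `f^M(x) = ∫ r dM(x)` of a model `M : X → Measure O`. -/
noncomputable def meanReward {X O : Type*} [MeasurableSpace O]
    (r : O → ℝ) (M : X → Measure O) (x : X) : ℝ :=
  ∫ o, r o ∂(M x)

/-- The Decision-Estimation Coefficient `dec_γ(C, M̄)` of a model class `C`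
relative to a reference model `Mbar`, where `piOf M` selects an optimal decision
for `M` and the infimum runs over finitely supported distributions on `X`. -/
noncomputable def decoef {X O : Type*} [MeasurableSpace O] (γ : ℝ) (r : O → ℝ)
    (piOf : (X → Measure O) → X) (C : Set (X → Measure O)) (Mbar : X → Measure O) : ℝ :=
  ⨅ p : FinDist X, ⨆ M : C, p.expect fun x =>
    meanReward r M.1 (piOf M.1) - meanReward r M.1 x - γ * sqHellinger (M.1 x) (Mbar x)

/-! ### Auxiliary lemmas -/

section HellingerAux

variable {α : Type*} [MeasurableSpace α]

lemma sqHellinger_nonneg (P Q : Measure α) : 0 ≤ sqHellinger P Q :=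
  integral_nonneg fun _ => sq_nonneg _

lemma sqHellinger_self (P : Measure α) : sqHellinger P P = 0 := by
  simp [sqHellinger]

lemma sq_sqrt_sub_le {a b : ℝ} (ha : 0 ≤ a) (hb : 0 ≤ b) :
    (Real.sqrt a - Real.sqrt b) ^ 2 ≤ a + b := by
  nlinarith [Real.sq_sqrt ha, Real.sq_sqrt hb,
    mul_nonneg (Real.sqrt_nonneg a) (Real.sqrt_nonneg b)]

lemma hellinger_integrand_meas (P Q ν : Measure α) :
    Measurable fun x => (Real.sqrt ((P.rnDeriv ν) x).toReal
      - Real.sqrt ((Q.rnDeriv ν) x).toReal) ^ 2 := by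
  apply Measurable.pow_const
  exact ((Measure.measurable_rnDeriv P ν).ennreal_toReal.sqrt).sub
    ((Measure.measurable_rnDeriv Q ν).ennreal_toReal.sqrt)

lemma hellinger_integrand_integrable (P Q ν : Measure α)
    [IsFiniteMeasure P] [IsFiniteMeasure Q] :
    Integrable (fun x => (Real.sqrt ((P.rnDeriv ν) x).toReal
      - Real.sqrt ((Q.rnDeriv ν) x).toReal) ^ 2) ν := by
  refine ((Measure.integrable_toReal_rnDeriv (μ := P)).add
    (Measure.integrable_toReal_rnDeriv (μ := Q))).mono'
    (hellinger_integrand_meas P Q ν).aestronglyMeasurable (ae_of_all _ fun x => ?_)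
  rw [Real.norm_eq_abs, abs_of_nonneg (sq_nonneg _)]
  exact sq_sqrt_sub_le ENNReal.toReal_nonneg ENNReal.toReal_nonneg

/-- The squared Hellinger distance can be computed using any finite dominating measure. -/
lemma sqHellinger_eq (P Q ν : Measure α) [IsFiniteMeasure P] [IsFiniteMeasure Q]
    [SigmaFinite ν] (hP : P ≪ ν) (hQ : Q ≪ ν) :
    sqHellinger P Q = ∫ x, (Real.sqrt ((P.rnDeriv ν) x).toReal
      - Real.sqrt ((Q.rnDeriv ν) x).toReal) ^ 2 ∂ν := by
  set μ := P + Q with hμ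
  have hμν : μ ≪ ν := Measure.AbsolutelyContinuous.add_left hP hQ
  have hPμ : P ≪ μ := Measure.AbsolutelyContinuous.rfl.add_right Q
  have hQμ : Q ≪ μ := by
    intro s hs
    simp only [hμ, Measure.coe_add, Pi.add_apply, add_eq_zero] at hs
    exact hs.2
  have key := MeasureTheory.integral_rnDeriv_smul (μ := μ) (ν := ν) hμν
    (f := fun x => (Real.sqrt ((P.rnDeriv μ) x).toReal
      - Real.sqrt ((Q.rnDeriv μ) x).toReal) ^ 2)
  rw [sqHellinger, ← hμ, ← key]
  refine integral_congr_ae ?_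
  filter_upwards [Measure.rnDeriv_mul_rnDeriv (κ := ν) hPμ,
    Measure.rnDeriv_mul_rnDeriv (κ := ν) hQμ] with x h1 h2
  simp only [Pi.mul_apply] at h1 h2
  rw [← h1, ← h2, ENNReal.toReal_mul, ENNReal.toReal_mul,
    Real.sqrt_mul ENNReal.toReal_nonneg, Real.sqrt_mul ENNReal.toReal_nonneg, smul_eq_mul]
  have ht := Real.sq_sqrt (ENNReal.toReal_nonneg (a := μ.rnDeriv ν x))
  linear_combination (-(Real.sqrt (P.rnDeriv μ x).toReal
    - Real.sqrt (Q.rnDeriv μ x).toReal) ^ 2) * ht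

/-- Pointwise joint-convexity inequality for the Hellinger integrand. -/
lemma sqrt_mix_le {c p q e : ℝ} (hc : 0 ≤ c) (hp : 0 ≤ p) (hq : 0 ≤ q)
    (he0 : 0 ≤ e) (he1 : e ≤ 1) :
    (Real.sqrt ((1 - e) * c + e * p) - Real.sqrt ((1 - e) * c + e * q)) ^ 2
      ≤ e * (Real.sqrt p - Real.sqrt q) ^ 2 := by
  have he1' : (0:ℝ) ≤ 1 - e := by linarith
  have ha : 0 ≤ (1 - e) * c + e * p := add_nonneg (mul_nonneg he1' hc) (mul_nonneg he0 hp)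
  have hb : 0 ≤ (1 - e) * c + e * q := add_nonneg (mul_nonneg he1' hc) (mul_nonneg he0 hq)
  have hsp := Real.sq_sqrt hp
  have hsq := Real.sq_sqrt hq
  have hsa := Real.sq_sqrt ha
  have hsb := Real.sq_sqrt hb
  have hid : ((1 - e) * c + e * p) * ((1 - e) * c + e * q)
      - ((1 - e) * c + e * (Real.sqrt p * Real.sqrt q)) ^ 2
      = (1 - e) * c * e * (Real.sqrt p - Real.sqrt q) ^ 2 := by
    linear_combination (-((1 - e) * c * e + e ^ 2 * q)) * hsp
      + (-((1 - e) * c * e + e ^ 2 * Real.sqrt p ^ 2)) * hsq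
  have hkey : ((1 - e) * c + e * (Real.sqrt p * Real.sqrt q)) ^ 2
      ≤ ((1 - e) * c + e * p) * ((1 - e) * c + e * q) := by
    nlinarith [hid, mul_nonneg (mul_nonneg (mul_nonneg he1' hc) he0)
      (sq_nonneg (Real.sqrt p - Real.sqrt q))]
  have hw := Real.le_sqrt_of_sq_le hkey
  rw [Real.sqrt_mul ha] at hw
  nlinarith [hw, hsa, hsb, hsp, hsq]

lemma ac_add_left' (μ ν : Measure α) : μ ≪ ν + μ := fun s hs => by
  simp only [Measure.coe_add, Pi.add_apply, add_eq_zero] at hs; exact hs.2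

/-- Mixing both arguments of the squared Hellinger distance with a common measure
contracts it by the mixture weight. -/
lemma sqHellinger_mix_le (P0 P Q : Measure α)
    [IsFiniteMeasure P0] [IsFiniteMeasure P] [IsFiniteMeasure Q]
    {e : ℝ} (he0 : 0 ≤ e) (he1 : e ≤ 1) :
    sqHellinger (ENNReal.ofReal (1 - e) • P0 + ENNReal.ofReal e • P)
      (ENNReal.ofReal (1 - e) • P0 + ENNReal.ofReal e • Q) ≤ e * sqHellinger P Q := by
  have he1' : (0:ℝ) ≤ 1 - e := by linarith
  set A := ENNReal.ofReal (1 - e) • P0 + ENNReal.ofReal e • P with hA_def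
  set B := ENNReal.ofReal (1 - e) • P0 + ENNReal.ofReal e • Q with hB_def
  set ν := P0 + P + Q with hν_def
  haveI : IsFiniteMeasure (ENNReal.ofReal (1 - e) • P0) := P0.smul_finite ENNReal.ofReal_ne_top
  haveI : IsFiniteMeasure (ENNReal.ofReal e • P) := P.smul_finite ENNReal.ofReal_ne_top
  haveI : IsFiniteMeasure (ENNReal.ofReal e • Q) := Q.smul_finite ENNReal.ofReal_ne_top
  have hP0 : P0 ≪ ν := (Measure.AbsolutelyContinuous.rfl.add_right P).add_right Q
  have hPν : P ≪ ν := (ac_add_left' P P0).add_right Q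
  have hQν : Q ≪ ν := ac_add_left' Q (P0 + P)
  have hA : A ≪ ν :=
    Measure.AbsolutelyContinuous.add_left (hP0.smul_left _) (hPν.smul_left _)
  have hB : B ≪ ν :=
    Measure.AbsolutelyContinuous.add_left (hP0.smul_left _) (hQν.smul_left _)
  rw [sqHellinger_eq A B ν hA hB, sqHellinger_eq P Q ν hPν hQν, ← integral_const_mul]
  refine integral_mono_ae (hellinger_integrand_integrable A B ν)
    ((hellinger_integrand_integrable P Q ν).const_mul e) ?_
  have hdA : A.rnDeriv ν =ᵐ[ν]
      (ENNReal.ofReal (1 - e) • P0.rnDeriv ν) + (ENNReal.ofReal e • P.rnDeriv ν) := by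
    refine (Measure.rnDeriv_add _ _ ν).trans ?_
    exact Filter.EventuallyEq.add
      (Measure.rnDeriv_smul_left_of_ne_top P0 ν ENNReal.ofReal_ne_top)
      (Measure.rnDeriv_smul_left_of_ne_top P ν ENNReal.ofReal_ne_top)
  have hdB : B.rnDeriv ν =ᵐ[ν]
      (ENNReal.ofReal (1 - e) • P0.rnDeriv ν) + (ENNReal.ofReal e • Q.rnDeriv ν) := by
    refine (Measure.rnDeriv_add _ _ ν).trans ?_
    exact Filter.EventuallyEq.add
      (Measure.rnDeriv_smul_left_of_ne_top P0 ν ENNReal.ofReal_ne_top)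
      (Measure.rnDeriv_smul_left_of_ne_top Q ν ENNReal.ofReal_ne_top)
  filter_upwards [hdA, hdB, Measure.rnDeriv_lt_top P0 ν, Measure.rnDeriv_lt_top P ν,
    Measure.rnDeriv_lt_top Q ν] with x h1 h2 h3 h4 h5
  have e1 : ((A.rnDeriv ν) x).toReal
      = (1 - e) * ((P0.rnDeriv ν) x).toReal + e * ((P.rnDeriv ν) x).toReal := by
    rw [h1]
    simp only [Pi.add_apply, Pi.smul_apply, smul_eq_mul]
    rw [ENNReal.toReal_add (ENNReal.mul_ne_top ENNReal.ofReal_ne_top h3.ne)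
      (ENNReal.mul_ne_top ENNReal.ofReal_ne_top h4.ne), ENNReal.toReal_mul, ENNReal.toReal_mul,
      ENNReal.toReal_ofReal he1', ENNReal.toReal_ofReal he0]
  have e2 : ((B.rnDeriv ν) x).toReal
      = (1 - e) * ((P0.rnDeriv ν) x).toReal + e * ((Q.rnDeriv ν) x).toReal := by
    rw [h2]
    simp only [Pi.add_apply, Pi.smul_apply, smul_eq_mul]
    rw [ENNReal.toReal_add (ENNReal.mul_ne_top ENNReal.ofReal_ne_top h3.ne)
      (ENNReal.mul_ne_top ENNReal.ofReal_ne_top h5.ne), ENNReal.toReal_mul, ENNReal.toReal_mul,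
      ENNReal.toReal_ofReal he1', ENNReal.toReal_ofReal he0]
  rw [e1, e2]
  exact sqrt_mix_le ENNReal.toReal_nonneg ENNReal.toReal_nonneg ENNReal.toReal_nonneg he0 he1

end HellingerAux

section FinDistAux

variable {X : Type*}

lemma FinDist.expect_le_one (p : FinDist X) {h : X → ℝ}
    (hb : ∀ x, h x ≤ 1) : p.expect h ≤ 1 := by
  calc p.expect h ≤ ∑ x ∈ p.support, p.w x * 1 :=
        Finset.sum_le_sum fun x _ => mul_le_mul_of_nonneg_left (hb x) (p.nonneg x)
    _ = 1 := by simp [p.sum_eq_one]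

lemma FinDist.expect_nonneg (p : FinDist X) {h : X → ℝ}
    (hb : ∀ x, 0 ≤ h x) : 0 ≤ p.expect h :=
  Finset.sum_nonneg fun x _ => mul_nonneg (p.nonneg x) (hb x)

lemma FinDist.expect_mono (p : FinDist X) {h g : X → ℝ}
    (hb : ∀ x, h x ≤ g x) : p.expect h ≤ p.expect g :=
  Finset.sum_le_sum fun x _ => mul_le_mul_of_nonneg_left (hb x) (p.nonneg x)

lemma FinDist.expect_const_mul (p : FinDist X) (h : X → ℝ) (e : ℝ) :
    p.expect (fun x => e * h x) = e * p.expect h := by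
  simp only [FinDist.expect, Finset.mul_sum]
  exact Finset.sum_congr rfl fun x _ => by ring

end FinDistAux

lemma integral_mix {O : Type*} [MeasurableSpace O] {r : O → ℝ} {μ0 μ : Measure O}
    (hi0 : Integrable r μ0) (hi : Integrable r μ) {e : ℝ} (he0 : 0 ≤ e) (he1 : e ≤ 1) :
    ∫ o, r o ∂(ENNReal.ofReal (1 - e) • μ0 + ENNReal.ofReal e • μ)
      = (1 - e) * ∫ o, r o ∂μ0 + e * ∫ o, r o ∂μ := by
  rw [integral_add_measure (hi0.smul_measure ENNReal.ofReal_ne_top)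
    (hi.smul_measure ENNReal.ofReal_ne_top), integral_smul_measure, integral_smul_measure,
    ENNReal.toReal_ofReal (by linarith : (0:ℝ) ≤ 1 - e), ENNReal.toReal_ofReal he0,
    smul_eq_mul, smul_eq_mul]

/-- The integrand appearing in the definition of `decoef`. -/
noncomputable def decTerm {X O : Type*} [MeasurableSpace O] (γ : ℝ) (r : O → ℝ)
    (piOf : (X → Measure O) → X) (Mbar M : X → Measure O) (x : X) : ℝ :=
  meanReward r M (piOf M) - meanReward r M x - γ * sqHellinger (M x) (Mbar x)

lemma decoef_eq {X O : Type*} [MeasurableSpace O] (γ : ℝ) (r : O → ℝ)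
    (piOf : (X → Measure O) → X) (C : Set (X → Measure O)) (Mbar : X → Measure O) :
    decoef γ r piOf C Mbar
      = ⨅ p : FinDist X, ⨆ M : C, p.expect (decTerm γ r piOf Mbar M.1) := rfl
/-- local-to-global lemma for the Decision-Estimation Coefficient:
for a class of models containing a constant-mean model `M₀` and star-shaped
around it, the `ε`-localized DEC dominates `ε` times the global DEC. -/
theorem local_to_global_dec {X O : Type*} [MeasurableSpace X] [MeasurableSpace O]
    (r : O → ℝ) (hr_meas : Measurable r) (hr_mem : ∀ o, r o ∈ Set.Icc (0 : ℝ) 1)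
    (𝔐 : Set (X → Measure O)) (h_prob : ∀ M ∈ 𝔐, ∀ x, IsProbabilityMeasure (M x))
    (piOf : (X → Measure O) → X)
    (h_max : ∀ M ∈ 𝔐, ∀ x, meanReward r M x ≤ meanReward r M (piOf M))
    (M₀ : X → Measure O) (hM₀ : M₀ ∈ 𝔐) (c₀ : ℝ) (hM₀_const : ∀ x, meanReward r M₀ x = c₀)
    (h_star : ∀ M ∈ 𝔐, ∀ lam ∈ Set.Icc (0 : ℝ) 1,
      (fun x => ENNReal.ofReal (1 - lam) • M₀ x + ENNReal.ofReal lam • M x) ∈ 𝔐)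
    (ε : ℝ) (hε : ε ∈ Set.Icc (0 : ℝ) 1) (γ : ℝ) (hγ : 0 ≤ γ) :
    ε * (⨆ Mbar : 𝔐, decoef γ r piOf 𝔐 Mbar.1) ≤
      ⨆ Mbar : 𝔐, decoef γ r piOf
        {M | M ∈ 𝔐 ∧ meanReward r M (piOf M) - ε ≤ meanReward r Mbar.1 (piOf Mbar.1)}
        Mbar.1 := by
  classical
  obtain ⟨hε0, hε1⟩ := hε
  have hX : Nonempty X := ⟨piOf fun _ => 0⟩
  obtain ⟨x₀⟩ := hX
  let p₀ : FinDist X := ⟨{x₀}, fun y => if y = x₀ then 1 else 0,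
    fun y => by split <;> norm_num,
    fun y hy => if_neg (by simpa using hy),
    by simp⟩
  haveI : Nonempty (FinDist X) := ⟨p₀⟩
  -- integrability and boundedness of mean rewards
  have hint : ∀ M ∈ 𝔐, ∀ x : X, Integrable r (M x) := by
    intro M hM x
    haveI := h_prob M hM x
    exact (integrable_const 1).mono' hr_meas.aestronglyMeasurable
      (ae_of_all _ fun o => by
        rw [Real.norm_eq_abs, abs_of_nonneg (hr_mem o).1]; exact (hr_mem o).2)
  have hf0 : ∀ M ∈ 𝔐, ∀ x, 0 ≤ meanReward r M x := fun M _ x =>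
    integral_nonneg fun o => (hr_mem o).1
  have hf1 : ∀ M ∈ 𝔐, ∀ x, meanReward r M x ≤ 1 := by
    intro M hM x
    haveI := h_prob M hM x
    calc meanReward r M x ≤ ∫ _, (1:ℝ) ∂(M x) :=
          integral_mono (hint M hM x) (integrable_const 1) fun o => (hr_mem o).2
      _ = 1 := by simp
  -- bound on the integrand
  have hterm1 : ∀ (Mb M : X → Measure O), M ∈ 𝔐 → ∀ x, decTerm γ r piOf Mb M x ≤ 1 := by
    intro Mb M hM x
    have h1 := hf1 M hM (piOf M)
    have h2 := hf0 M hM x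
    have h3 : 0 ≤ γ * sqHellinger (M x) (Mb x) := mul_nonneg hγ (sqHellinger_nonneg _ _)
    unfold decTerm; linarith
  have hbdd : ∀ (C : Set (X → Measure O)), C ⊆ 𝔐 → ∀ (Mb : X → Measure O) (p : FinDist X),
      BddAbove (Set.range fun M : C => p.expect (decTerm γ r piOf Mb M.1)) := by
    intro C hC Mb p
    refine ⟨1, ?_⟩
    rintro y ⟨M, rfl⟩
    exact p.expect_le_one fun x => hterm1 Mb M.1 (hC M.2) x
  have hsup_le_one : ∀ (C : Set (X → Measure O)), C ⊆ 𝔐 →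
      ∀ (Mb : X → Measure O) (p : FinDist X),
      (⨆ M : C, p.expect (decTerm γ r piOf Mb M.1)) ≤ 1 := fun C hC Mb p =>
    Real.iSup_le (fun M => p.expect_le_one fun x => hterm1 Mb M.1 (hC M.2) x) zero_le_one
  have hsup_nonneg : ∀ (C : Set (X → Measure O)), C ⊆ 𝔐 →
      ∀ (Mb : X → Measure O), Mb ∈ C → ∀ (p : FinDist X),
      0 ≤ ⨆ M : C, p.expect (decTerm γ r piOf Mb M.1) := by
    intro C hC Mb hMb p
    refine le_trans ?_ (le_ciSup (hbdd C hC Mb p) ⟨Mb, hMb⟩)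
    refine p.expect_nonneg fun x => ?_
    have := h_max Mb (hC hMb) x
    unfold decTerm
    rw [sqHellinger_self, mul_zero]
    linarith
  have hdec_nonneg : ∀ (C : Set (X → Measure O)), C ⊆ 𝔐 → ∀ Mb, Mb ∈ C →
      0 ≤ decoef γ r piOf C Mb := by
    intro C hC Mb hMb
    rw [decoef_eq]
    exact le_ciInf fun p => hsup_nonneg C hC Mb hMb p
  have hdec_le_one : ∀ (C : Set (X → Measure O)), C ⊆ 𝔐 → ∀ Mb, Mb ∈ C →
      decoef γ r piOf C Mb ≤ 1 := by
    intro C hC Mb hMb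
    rw [decoef_eq]
    refine ciInf_le_of_le ⟨0, ?_⟩ p₀ (hsup_le_one C hC Mb p₀)
    rintro y ⟨p, rfl⟩
    exact hsup_nonneg C hC Mb hMb p
  -- localized classes
  set loc := fun Mbar : 𝔐 =>
    {M | M ∈ 𝔐 ∧ meanReward r M (piOf M) - ε ≤ meanReward r Mbar.1 (piOf Mbar.1)} with hloc
  have hloc_sub : ∀ Mbar, loc Mbar ⊆ 𝔐 := fun Mbar M hM => hM.1
  have hloc_self : ∀ Mbar : 𝔐, Mbar.1 ∈ loc Mbar := fun Mbar => ⟨Mbar.2, by linarith⟩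
  set S := ⨆ Mbar : 𝔐, decoef γ r piOf (loc Mbar) Mbar.1 with hS
  have hSbdd : BddAbove (Set.range fun Mbar : 𝔐 => decoef γ r piOf (loc Mbar) Mbar.1) := by
    refine ⟨1, ?_⟩
    rintro y ⟨Mbar, rfl⟩
    exact hdec_le_one _ (hloc_sub Mbar) _ (hloc_self Mbar)
  have hS0 : 0 ≤ S :=
    le_trans (hdec_nonneg _ (hloc_sub ⟨M₀, hM₀⟩) _ (hloc_self ⟨M₀, hM₀⟩))
      (le_ciSup hSbdd ⟨M₀, hM₀⟩)
  rcases eq_or_lt_of_le hε0 with hε' | hε'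
  · rw [← hε']
    simpa using hS0
  -- mixtures
  have hmix_mean : ∀ M ∈ 𝔐, ∀ x : X,
      meanReward r (fun y => ENNReal.ofReal (1 - ε) • M₀ y + ENNReal.ofReal ε • M y) x
        = (1 - ε) * c₀ + ε * meanReward r M x := by
    intro M hM x
    haveI := h_prob M₀ hM₀ x
    haveI := h_prob M hM x
    have h := integral_mix (r := r) (μ0 := M₀ x) (μ := M x)
      (hint M₀ hM₀ x) (hint M hM x) hε0 hε1
    have h0 := hM₀_const x
    simp only [meanReward] at h0 ⊢
    rw [h, h0]
  have hmix_max : ∀ M ∈ 𝔐,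
      meanReward r (fun y => ENNReal.ofReal (1 - ε) • M₀ y + ENNReal.ofReal ε • M y)
        (piOf (fun y => ENNReal.ofReal (1 - ε) • M₀ y + ENNReal.ofReal ε • M y))
        = (1 - ε) * c₀ + ε * meanReward r M (piOf M) := by
    intro M hM
    have hM' := h_star M hM ε ⟨hε0, hε1⟩
    set M' := fun y => ENNReal.ofReal (1 - ε) • M₀ y + ENNReal.ofReal ε • M y with hM'_def
    have hmm := hmix_mean M hM
    have h1 := h_max M hM (piOf M')
    have h2 := h_max M' hM' (piOf M)
    rw [hmm, hmm] at h2
    have h3 : meanReward r M (piOf M) ≤ meanReward r M (piOf M') :=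
      le_of_mul_le_mul_left (by linarith) hε'
    rw [hmm]
    have : meanReward r M (piOf M') = meanReward r M (piOf M) := le_antisymm h1 h3
    rw [this]
  -- the key inequality
  have key : ∀ Mb : 𝔐, ε * decoef γ r piOf 𝔐 Mb.1 ≤ S := by
    rintro ⟨Mb, hMb⟩
    set Mb' := fun y => ENNReal.ofReal (1 - ε) • M₀ y + ENNReal.ofReal ε • Mb y with hMb'_def
    have hMb' : Mb' ∈ 𝔐 := h_star Mb hMb ε ⟨hε0, hε1⟩
    have hSge : decoef γ r piOf (loc ⟨Mb', hMb'⟩) Mb' ≤ S :=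
      le_ciSup hSbdd ⟨Mb', hMb'⟩
    refine le_trans ?_ hSge
    rw [decoef_eq γ r piOf (loc ⟨Mb', hMb'⟩) Mb']
    refine le_ciInf fun p => ?_
    -- compare against the global sup for the same p
    have hglob : decoef γ r piOf 𝔐 Mb ≤ ⨆ M : 𝔐, p.expect (decTerm γ r piOf Mb M.1) := by
      rw [decoef_eq]
      refine ciInf_le ⟨0, ?_⟩ p
      rintro y ⟨q, rfl⟩
      exact hsup_nonneg 𝔐 le_rfl Mb hMb q
    have hsupLoc_nonneg : 0 ≤ ⨆ M : loc ⟨Mb', hMb'⟩, p.expect (decTerm γ r piOf Mb' M.1) :=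
      hsup_nonneg _ (hloc_sub ⟨Mb', hMb'⟩) Mb' (hloc_self ⟨Mb', hMb'⟩) p
    have hstep : ε * (⨆ M : 𝔐, p.expect (decTerm γ r piOf Mb M.1))
        ≤ ⨆ M : loc ⟨Mb', hMb'⟩, p.expect (decTerm γ r piOf Mb' M.1) := by
      set B := ⨆ M : loc ⟨Mb', hMb'⟩, p.expect (decTerm γ r piOf Mb' M.1) with hB
      have hA : (⨆ M : 𝔐, p.expect (decTerm γ r piOf Mb M.1)) ≤ B / ε := by
        refine Real.iSup_le (fun M => ?_) (div_nonneg hsupLoc_nonneg hε0)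
        rw [le_div_iff₀ hε']
        obtain ⟨M, hM⟩ := M
        set M' := fun y => ENNReal.ofReal (1 - ε) • M₀ y + ENNReal.ofReal ε • M y with hM'_def
        have hM' : M' ∈ 𝔐 := h_star M hM ε ⟨hε0, hε1⟩
        -- membership in the localized class
        have hmem : M' ∈ loc ⟨Mb', hMb'⟩ := by
          refine ⟨hM', ?_⟩
          rw [hmix_max M hM, hmix_max Mb hMb]
          have i1 : ε * meanReward r M (piOf M) ≤ ε * 1 :=
            mul_le_mul_of_nonneg_left (hf1 M hM (piOf M)) hε0
          have i2 : 0 ≤ ε * meanReward r Mb (piOf Mb) :=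
            mul_nonneg hε0 (hf0 Mb hMb (piOf Mb))
          linarith
        -- pointwise comparison of the integrands
        have hpt : ∀ x, ε * decTerm γ r piOf Mb M x ≤ decTerm γ r piOf Mb' M' x := by
          intro x
          haveI := h_prob M₀ hM₀ x
          haveI := h_prob M hM x
          haveI := h_prob Mb hMb x
          have hH : sqHellinger (M' x) (Mb' x) ≤ ε * sqHellinger (M x) (Mb x) :=
            sqHellinger_mix_le (M₀ x) (M x) (Mb x) hε0 hε1
          have hγH : γ * sqHellinger (M' x) (Mb' x) ≤ γ * (ε * sqHellinger (M x) (Mb x)) :=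
            mul_le_mul_of_nonneg_left hH hγ
          unfold decTerm
          rw [hmix_max M hM, hmix_mean M hM x]
          nlinarith [hγH]
        calc p.expect (decTerm γ r piOf Mb M) * ε
            = p.expect (fun x => ε * decTerm γ r piOf Mb M x) := by
              rw [p.expect_const_mul (decTerm γ r piOf Mb M) ε]; ring
          _ ≤ p.expect (decTerm γ r piOf Mb' M') := p.expect_mono hpt
          _ ≤ B := le_ciSup (hbdd _ (hloc_sub ⟨Mb', hMb'⟩) Mb' p) ⟨M', hmem⟩
      calc ε * (⨆ M : 𝔐, p.expect (decTerm γ r piOf Mb M.1)) ≤ ε * (B / ε) :=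
            mul_le_mul_of_nonneg_left hA hε0
        _ = B := by field_simp
    calc ε * decoef γ r piOf 𝔐 Mb ≤ ε * ⨆ M : 𝔐, p.expect (decTerm γ r piOf Mb M.1) :=
          mul_le_mul_of_nonneg_left hglob hε0
      _ ≤ _ := hstep
  -- conclude
  have hsupD : (⨆ Mbar : 𝔐, decoef γ r piOf 𝔐 Mbar.1) ≤ S / ε := by
    refine Real.iSup_le (fun Mb => ?_) (div_nonneg hS0 hε0)
    rw [le_div_iff₀ hε']
    rw [mul_comm]
    exact key Mb
  calc ε * (⨆ Mbar : 𝔐, decoef γ r piOf 𝔐 Mbar.1) ≤ ε * (S / ε) :=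
        mul_le_mul_of_nonneg_left hsupD hε0
    _ = S := by field_simp
end

section
/- Let Π and 𝒪 be measurable spaces, let r : 𝒪 → [0,1] be a measurable reward function, and call a map M from Π to probability measures on 𝒪 a model, with f^M(π) := ∫ r dM(π) and π_M a maximizer of f^M over Π (assumed to exist for each model considered). Let 𝔐 be a class of models, M* ∈ 𝔐, γ > 0, T ∈ ℕ, and let M̂¹,…,M̂^T be arbitrary models and p¹,…,p^T finitely supported probability distributions on Π such that for each t there is a real number V_t with sup_{M ∈ 𝔐} E_{π∼pᵗ}[ f^M(π_M) − f^M(π) − γ·D_H²(M(π), M̂ᵗ(π)) ] ≤ V_t. Then the cumulative regret satisfies ∑_{t=1}^T E_{π∼pᵗ}[ f^{M*}(π_{M*}) − f^{M*}(π) ] ≤ ∑_{t=1}^T V_t + γ·∑_{t=1}^T E_{π∼pᵗ}[ D_H²(M*(π), M̂ᵗ(π)) ]. In particular, if each pᵗ attains dec_γ(𝔐, M̂ᵗ) := inf_p sup_{M∈𝔐} E_{π∼p}[ f^M(π_M) − f^M(π) − γ·D_H²(M(π), M̂ᵗ(π)) ], the cumulative regret is at most sup_{1≤t≤T} dec_γ(𝔐,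 M̂ᵗ)·T + γ·∑_{t=1}^T E_{π∼pᵗ}[ D_H²(M*(π), M̂ᵗ(π)) ]. -/
open MeasureTheory

lemma FinDist.expect_sub_mul {X : Type*} (p : FinDist X) (f g : X → ℝ) (c : ℝ) :
    p.expect (fun x => f x - c * g x) = p.expect f - c * p.expect g := by
  simp only [FinDist.expect, mul_sub, Finset.mul_sum]
  rw [Finset.sum_sub_distrib]
  congr 1
  exact Finset.sum_congr rfl fun x _ => by ring

/-- almost-sure regret guarantee for the Estimation-to-Decisions
meta-algorithm: if at each round `t` the played distribution `p t` certifies the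
value `V t` for the estimated model `Mhat t`, the cumulative regret is bounded by
`∑ V t` plus `γ` times the cumulative Hellinger estimation error; in particular,
if each `p t` attains the DEC, the regret is at most `sup_t dec·T + γ·Est`. -/
theorem e2d_regret_bound {X O : Type*} [MeasurableSpace X] [MeasurableSpace O]
    (r : O → ℝ) (hr_meas : Measurable r) (hr_mem : ∀ o, r o ∈ Set.Icc (0 : ℝ) 1)
    (𝔐 : Set (X → Measure O)) (h_prob : ∀ M ∈ 𝔐, ∀ x, IsProbabilityMeasure (M x))
    (piOf : (X → Measure O) → X)
    (h_max : ∀ M ∈ 𝔐, ∀ x, meanReward r M x ≤ meanReward r M (piOf M))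
    (Mstar : X → Measure O) (hMstar : Mstar ∈ 𝔐)
    (γ : ℝ) (hγ : 0 < γ) (T : ℕ)
    (Mhat : Fin T → X → Measure O) (hMhat_prob : ∀ t x, IsProbabilityMeasure (Mhat t x))
    (p : Fin T → FinDist X) (V : Fin T → ℝ)
    (hV : ∀ t, ∀ M ∈ 𝔐, (p t).expect (fun x =>
        meanReward r M (piOf M) - meanReward r M x -
          γ * sqHellinger (M x) (Mhat t x)) ≤ V t) :
    ((∑ t, (p t).expect fun x => meanReward r Mstar (piOf Mstar) - meanReward r Mstar x) ≤
        (∑ t, V t) + γ * ∑ t, (p t).expect fun x => sqHellinger (Mstar x) (Mhat t x)) ∧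
      ((∀ t, (⨆ M : 𝔐, (p t).expect fun x =>
            meanReward r M.1 (piOf M.1) - meanReward r M.1 x -
              γ * sqHellinger (M.1 x) (Mhat t x)) = decoef γ r piOf 𝔐 (Mhat t)) →
        (∑ t, (p t).expect fun x =>
            meanReward r Mstar (piOf Mstar) - meanReward r Mstar x) ≤
          (⨆ t, decoef γ r piOf 𝔐 (Mhat t)) * (T : ℝ) +
            γ * ∑ t, (p t).expect fun x => sqHellinger (Mstar x) (Mhat t x)) := by
  -- common facts
  set reg : Fin T → ℝ := fun t => (p t).expect fun x =>
      meanReward r Mstar (piOf Mstar) - meanReward r Mstar x with hreg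
  set est : Fin T → ℝ := fun t => (p t).expect fun x => sqHellinger (Mstar x) (Mhat t x)
    with hest
  have key : ∀ t, reg t - γ * est t ≤ V t := by
    intro t
    have h1 := hV t Mstar hMstar
    rwa [FinDist.expect_sub_mul (p t)
      (fun x => meanReward r Mstar (piOf Mstar) - meanReward r Mstar x)
      (fun x => sqHellinger (Mstar x) (Mhat t x)) γ] at h1
  constructor
  · have : ∀ t ∈ Finset.univ, reg t ≤ V t + γ * est t := fun t _ => by linarith [key t]
    have hs := Finset.sum_le_sum this
    rw [Finset.sum_add_distrib, ← Finset.mul_sum] at hs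
    exact hs
  · intro hdec
    have keyd : ∀ t, reg t - γ * est t ≤ decoef γ r piOf 𝔐 (Mhat t) := by
      intro t
      rw [← hdec t]
      have hbdd : BddAbove (Set.range fun M : 𝔐 => (p t).expect fun x =>
          meanReward r M.1 (piOf M.1) - meanReward r M.1 x -
            γ * sqHellinger (M.1 x) (Mhat t x)) := by
        refine ⟨V t, ?_⟩
        rintro _ ⟨M, rfl⟩
        exact hV t M.1 M.2
      have hle := le_ciSup hbdd (⟨Mstar, hMstar⟩ : 𝔐)
      calc reg t - γ * est t
          = (p t).expect fun x =>
              meanReward r Mstar (piOf Mstar) - meanReward r Mstar x -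
                γ * sqHellinger (Mstar x) (Mhat t x) := by
            rw [FinDist.expect_sub_mul (p t)
              (fun x => meanReward r Mstar (piOf Mstar) - meanReward r Mstar x)
              (fun x => sqHellinger (Mstar x) (Mhat t x)) γ]
        _ ≤ _ := hle
    have hsup : ∀ t : Fin T, decoef γ r piOf 𝔐 (Mhat t) ≤
        ⨆ s, decoef γ r piOf 𝔐 (Mhat s) := by
      intro t
      exact le_ciSup (f := fun s => decoef γ r piOf 𝔐 (Mhat s))
        (Set.Finite.bddAbove (Set.finite_range _)) t
    have : ∀ t ∈ Finset.univ, reg t ≤ (⨆ s, decoef γ r piOf 𝔐 (Mhat s)) + γ * est t := by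
      intro t _
      have := keyd t
      have := hsup t
      linarith
    have hs := Finset.sum_le_sum this
    rw [Finset.sum_add_distrib, ← Finset.mul_sum, Finset.sum_const, Finset.card_univ,
      Fintype.card_fin, nsmul_eq_mul, mul_comm] at hs
    exact hs
end
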